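/- Let G be an n × m matrix over the finite field GF(q) such that any t columns of G are linearly independent. Then the multiset of row vectors { x·G : x ∈ GF(q)^n } forms an orthogonal array of strength t and index q^{n−t}: for any choice of t column indices j1 < ... < jt and any tuple (a1, ..., at) ∈ GF(q)^t, the number of x ∈ GF(q)^n such that (x·G)_{j_i} = a_i for all i equals q^{n−t}. -/

import Mathlib

/-!
The selected columns of `G` are linearly independent, so `x ↦ ((x ᵥ* G) (js i))ᵢ` is a
surjective linear map `Fⁿ → Fᵗ`. Each of its fibres is a coset of the kernel, which has
dimension `n - t` by rank–nullity, hence `q ^ (n - t)` elements.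
-/

open Module

theorem LinearIndependent.comp_of_forall_finset_card_eq {R V ι κ : Type*} [Semiring R]
    [AddCommMonoid V] [Module R V] [Fintype κ] {v : ι → V}
    (hv : ∀ s : Finset ι, s.card = Fintype.card κ → LinearIndependent R (fun j : s => v j))
    {f : κ → ι} (hf : Function.Injective f) : LinearIndependent R (v ∘ f) :=
  (hv (Finset.univ.map ⟨f, hf⟩) (by simp)).comp (fun k => ⟨f k, by simp⟩)
    fun _ _ h => hf (congrArg Subtype.val h)

theorem Matrix.vecMulLinear_surjective_of_linearIndependent_col {K m n : Type*} [Field K]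
    [Fintype m] [Fintype n] {M : Matrix m n K} (h : LinearIndependent K M.col) :
    Function.Surjective M.vecMulLinear := by
  rw [← LinearMap.range_eq_top]
  apply Submodule.eq_top_of_finrank_eq
  have hrank : M.transpose.rank = Fintype.card n := (M.row_transpose ▸ h).rank_matrix
  rwa [← M.transpose_transpose, vecMulLinear_transpose, finrank_fintype_fun_eq_card]

theorem LinearMap.natCard_preimage_singleton_of_surjective {K V W : Type*} [Field K]
    [AddCommGroup V] [Module K V] [FiniteDimensional K V] [AddCommGroup W] [Module K W]
    [FiniteDimensional K W] {f : V →ₗ[K] W} (hf : Function.Surjective f) (w : W) :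
    Nat.card (f ⁻¹' {w}) = Nat.card K ^ (finrank K V - finrank K W) := by
  have hker : finrank K (LinearMap.ker f) = finrank K V - finrank K W := by
    have := f.finrank_range_add_finrank_ker
    rw [LinearMap.range_eq_top.mpr hf, finrank_top] at this
    omega
  calc Nat.card (f ⁻¹' {w}) = Nat.card (LinearMap.ker f) :=
        Nat.card_congr (AddMonoidHom.fiberEquivKerOfSurjective (f := f.toAddMonoidHom) hf w)
    _ = Nat.card K ^ finrank K (LinearMap.ker f) := Module.natCard_eq_pow_finrank
    _ = Nat.card K ^ (finrank K V - finrank K W) := by rw [hker]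

theorem orthogonal_array_from_generator_matrix
    (q n m t : ℕ) (F : Type*) [Field F] [Fintype F] [DecidableEq F]
    (hq : Fintype.card F = q)
    (G : Matrix (Fin n) (Fin m) F)
    (hind : ∀ s : Finset (Fin m), s.card = t →
      LinearIndependent F (fun j : s => (fun i => G i j.1))) :
    ∀ js : Fin t → Fin m, StrictMono js → ∀ a : Fin t → F,
      Fintype.card {x : Fin n → F // ∀ i, Matrix.vecMul x G (js i) = a i} =
        q ^ (n - t) := by
  intro js hjs a
  have hcols : LinearIndependent F (G.submatrix id js).col :=
    LinearIndependent.comp_of_forall_finset_card_eq (v := G.col)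
      (fun s hs => hind s (by simpa using hs)) hjs.injective
  have hfiber : ∀ x : Fin n → F, (∀ i, Matrix.vecMul x G (js i) = a i) ↔
      x ∈ (G.submatrix id js).vecMulLinear ⁻¹' {a} := fun _ => funext_iff.symm
  rw [← Nat.card_eq_fintype_card, Nat.card_congr (Equiv.subtypeEquivRight hfiber),
    LinearMap.natCard_preimage_singleton_of_surjective
      (Matrix.vecMulLinear_surjective_of_linearIndependent_col hcols)]
  simp [hq]
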